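/- Let G be a group with a length function ℓ. Suppose there are constants C > 0 and p > 1, and for every n ∈ ℕ a finite subgroup L_n of G with L_n ⊆ B_ℓ(e, Cn) and |L_n| ≥ p^{n+1}. Then G does not have property RD with respect to ℓ; equivalently, there is no real polynomial P such that ‖f‖_* ≤ P(r)·‖f‖₂ for every r ≥ 0 and every nonnegative f ∈ ℂG supported in B_ℓ(e,r). -/

import Mathlib

open scoped BigOperators ComplexOrder

/-- The ℓ²-norm of a finitely supported function `f : G → ℂ`. -/
noncomputable def l2norm {G : Type*} [Group G] (f : MonoidAlgebra ℂ G) : ℝ :=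
  Real.sqrt (∑ γ ∈ f.coeff.support, ‖f.coeff γ‖ ^ 2)

/-- The operator norm of left convolution by `f` on `ℓ²(G)`. -/
noncomputable def opNorm {G : Type*} [Group G] (f : MonoidAlgebra ℂ G) : ℝ :=
  sSup {c : ℝ | ∃ g : MonoidAlgebra ℂ G, l2norm g = 1 ∧ c = l2norm (f * g)}

/-- The weighted ℓ²-norm `‖f‖_{ℓ,s}`. -/
noncomputable def sobolevNorm {G : Type*} [Group G] (ℓ : G → ℝ) (s : ℝ)
    (f : MonoidAlgebra ℂ G) : ℝ :=
  Real.sqrt (∑ γ ∈ f.coeff.support, ‖f.coeff γ‖ ^ 2 * (1 + ℓ γ) ^ (2 * s))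

/-- `ℓ` is a length function on the group `G`. -/
def IsLengthFunction {G : Type*} [Group G] (ℓ : G → ℝ) : Prop :=
  ℓ 1 = 0 ∧ (∀ γ, 0 ≤ ℓ γ) ∧ (∀ γ : G, ℓ γ⁻¹ = ℓ γ) ∧ ∀ γ μ : G, ℓ (γ * μ) ≤ ℓ γ + ℓ μ

/-- `G` has property RD with respect to the length function `ℓ`. -/
def PropertyRD {G : Type*} [Group G] (ℓ : G → ℝ) : Prop :=
  ∃ C s : ℝ, 0 < C ∧ 0 < s ∧ ∀ f : MonoidAlgebra ℂ G, opNorm f ≤ C * sobolevNorm ℓ s f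

/-!
For a finite subgroup `L`, the indicator `χ_L` satisfies `χ_L * χ_L = |L| • χ_L`, so
`‖χ_L‖_* ≥ |L|` while `‖χ_L‖₂ = √|L|`. A bound `‖f‖_* ≤ P(r) ‖f‖₂` on nonnegative `f` supported in
`B_ℓ(e, r)` therefore forces `|L_n| ≤ P(Cn)²`: a polynomial in `n` would dominate `pⁿ`.
Property RD yields such a bound with `P(r) = C'(1 + r)^⌈s⌉`, since `‖f‖_{ℓ,s} ≤ (1 + r)^s ‖f‖₂`
for `f` supported in `B_ℓ(e, r)`.
-/

section GroupAlgebra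

open MonoidAlgebra

variable {G : Type*}

section L2

variable [Group G]

lemma l2norm_nonneg (f : MonoidAlgebra ℂ G) : 0 ≤ l2norm f :=
  Real.sqrt_nonneg _

lemma l2norm_eq_sqrt_sum {f : MonoidAlgebra ℂ G} {S : Finset G} (h : f.coeff.support ⊆ S) :
    l2norm f = √(∑ γ ∈ S, ‖f.coeff γ‖ ^ 2) := by
  rw [l2norm, Finset.sum_subset h fun γ _ hγ => by simp [Finsupp.notMem_support_iff.mp hγ]]

lemma l2norm_eq_norm_toLp {f : MonoidAlgebra ℂ G} {S : Finset G} (h : f.coeff.support ⊆ S) :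
    l2norm f = ‖WithLp.toLp 2 fun γ : S => f.coeff γ‖ := by
  rw [l2norm_eq_sqrt_sum h, EuclideanSpace.norm_eq, ← Finset.sum_coe_sort S]

lemma l2norm_add_le (f g : MonoidAlgebra ℂ G) : l2norm (f + g) ≤ l2norm f + l2norm g := by
  classical
  let S := f.coeff.support ∪ g.coeff.support
  rw [l2norm_eq_norm_toLp (Finset.subset_union_left : _ ⊆ S),
    l2norm_eq_norm_toLp (Finset.subset_union_right : _ ⊆ S),
    l2norm_eq_norm_toLp (f := f + g) (Finsupp.support_add : _ ⊆ S)]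
  exact norm_add_le (WithLp.toLp 2 fun γ : S => f.coeff γ) (WithLp.toLp 2 fun γ : S => g.coeff γ)

lemma l2norm_sum_le {ι : Type*} (t : Finset ι) (f : ι → MonoidAlgebra ℂ G) :
    l2norm (∑ i ∈ t, f i) ≤ ∑ i ∈ t, l2norm (f i) :=
  Finset.le_sum_of_subadditive l2norm (by simp [l2norm]) l2norm_add_le t f

lemma l2norm_smul (c : ℂ) (f : MonoidAlgebra ℂ G) : l2norm (c • f) = ‖c‖ * l2norm f := by
  rw [l2norm_eq_sqrt_sum (f := c • f) Finsupp.support_smul, l2norm, ← Real.sqrt_sq (norm_nonneg c),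
    ← Real.sqrt_mul (sq_nonneg _), Finset.mul_sum]
  congr 1
  exact Finset.sum_congr rfl fun γ _ => by rw [coeff_smul_apply, smul_eq_mul, norm_mul, mul_pow]

lemma l2norm_single_mul (μ : G) (c : ℂ) (g : MonoidAlgebra ℂ G) :
    l2norm (single μ c * g) = ‖c‖ * l2norm g := by
  have hcoeff (γ : G) : (single μ c * g).coeff γ = c * g.coeff (μ⁻¹ * γ) :=
    coeff_single_mul_apply g c μ γ
  have hsupp : (single μ c * g).coeff.support ⊆ g.coeff.support.map (mulLeftEmbedding μ) := by
    intro γ hγ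
    rw [Finsupp.mem_support_iff, hcoeff] at hγ
    exact Finset.mem_map.mpr ⟨μ⁻¹ * γ, Finsupp.mem_support_iff.mpr (right_ne_zero_of_mul hγ),
      mul_inv_cancel_left μ γ⟩
  rw [l2norm_eq_sqrt_sum hsupp, Finset.sum_map, l2norm, ← Real.sqrt_sq (norm_nonneg c),
    ← Real.sqrt_mul (sq_nonneg _), Finset.mul_sum]
  simp [hcoeff, mul_pow]

lemma l2norm_mul_le (f g : MonoidAlgebra ℂ G) :
    l2norm (f * g) ≤ (∑ γ ∈ f.coeff.support, ‖f.coeff γ‖) * l2norm g := by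
  conv_lhs => rw [← sum_coeff_single f, Finsupp.sum, Finset.sum_mul]
  refine (l2norm_sum_le _ _).trans_eq ?_
  simp only [l2norm_single_mul, Finset.sum_mul]

end L2

section OpNorm

variable [Group G]

lemma bddAbove_l2norm_mul (f : MonoidAlgebra ℂ G) :
    BddAbove {c : ℝ | ∃ g : MonoidAlgebra ℂ G, l2norm g = 1 ∧ c = l2norm (f * g)} := by
  refine ⟨∑ γ ∈ f.coeff.support, ‖f.coeff γ‖, ?_⟩
  rintro c ⟨g, hg, rfl⟩
  simpa [hg] using l2norm_mul_le f g

lemma l2norm_mul_le_opNorm_mul (f g : MonoidAlgebra ℂ G) :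
    l2norm (f * g) ≤ opNorm f * l2norm g := by
  rcases (l2norm_nonneg g).eq_or_lt with hg | hg
  · simpa [← hg] using l2norm_mul_le f g
  have hunit : l2norm ((l2norm g : ℂ)⁻¹ • g) = 1 := by
    rw [l2norm_smul, norm_inv, Complex.norm_real, Real.norm_of_nonneg hg.le, inv_mul_cancel₀ hg.ne']
  have hle : (l2norm g)⁻¹ * l2norm (f * g) ≤ opNorm f := by
    refine le_csSup (bddAbove_l2norm_mul f) ⟨_, hunit, ?_⟩
    rw [mul_smul_comm, l2norm_smul, norm_inv, Complex.norm_real, Real.norm_of_nonneg hg.le]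
  rwa [inv_mul_le_iff₀ hg, mul_comm] at hle

end OpNorm

section Indicator

noncomputable def finsetIndicator (S : Finset G) : MonoidAlgebra ℂ G :=
  ∑ μ ∈ S, single μ 1

lemma coeff_finsetIndicator [DecidableEq G] (S : Finset G) (γ : G) :
    (finsetIndicator S).coeff γ = if γ ∈ S then 1 else 0 := by
  simp [finsetIndicator, coeff_sum, Finsupp.finsetSum_apply, coeff_single, Finsupp.single_apply]

lemma support_finsetIndicator (S : Finset G) : (finsetIndicator S).coeff.support = S := by
  classical
  ext γ
  by_cases hγ : γ ∈ S <;> simp [coeff_finsetIndicator, hγ]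

lemma coeff_finsetIndicator_nonneg (S : Finset G) (γ : G) : 0 ≤ (finsetIndicator S).coeff γ := by
  classical
  rw [coeff_finsetIndicator]
  split_ifs <;> norm_num

lemma l2norm_finsetIndicator [Group G] (S : Finset G) : l2norm (finsetIndicator S) = √S.card := by
  classical
  rw [l2norm, support_finsetIndicator]
  simp +contextual [coeff_finsetIndicator]

variable [Group G] {H : Subgroup G} {S : Finset G}

lemma card_pos_of_coe_eq_subgroup (hS : (S : Set G) = H) : 0 < S.card :=
  Finset.card_pos.mpr ⟨1, by rw [← Finset.mem_coe, hS]; exact H.one_mem⟩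

lemma finsetIndicator_mul_self (hS : (S : Set G) = H) :
    finsetIndicator S * finsetIndicator S = (S.card : ℂ) • finsetIndicator S := by
  have hmem {γ : G} : γ ∈ S ↔ γ ∈ H := by rw [← Finset.mem_coe, hS, SetLike.mem_coe]
  have htranslate (μ : G) (hμ : μ ∈ S) : S.map (mulLeftEmbedding μ) = S := by
    ext γ
    simp only [Finset.mem_map, mulLeftEmbedding_apply, hmem]
    exact ⟨by rintro ⟨ν, hν, rfl⟩; exact mul_mem (hmem.mp hμ) hν,
      fun hγ => ⟨μ⁻¹ * γ, mul_mem (inv_mem (hmem.mp hμ)) hγ, mul_inv_cancel_left μ γ⟩⟩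
  have hrow (μ : G) (hμ : μ ∈ S) : single μ (1 : ℂ) * finsetIndicator S = finsetIndicator S := by
    conv_rhs => rw [finsetIndicator, ← htranslate μ hμ, Finset.sum_map]
    simp [finsetIndicator, Finset.mul_sum, single_mul_single]
  nth_rewrite 1 [finsetIndicator]
  rw [Finset.sum_mul, Finset.sum_congr rfl hrow, Finset.sum_const, Nat.cast_smul_eq_nsmul]

lemma card_le_opNorm_finsetIndicator (hS : (S : Set G) = H) :
    (S.card : ℝ) ≤ opNorm (finsetIndicator S) := by
  have h := l2norm_mul_le_opNorm_mul (finsetIndicator S) (finsetIndicator S)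
  rw [finsetIndicator_mul_self hS, l2norm_smul, Complex.norm_natCast,
    l2norm_finsetIndicator] at h
  exact le_of_mul_le_mul_right h (by have := card_pos_of_coe_eq_subgroup hS; positivity)

lemma sqrt_card_le_of_opNorm_finsetIndicator_le (hS : (S : Set G) = H) {B : ℝ}
    (hB : opNorm (finsetIndicator S) ≤ B * l2norm (finsetIndicator S)) : √(S.card : ℝ) ≤ B := by
  rw [l2norm_finsetIndicator] at hB
  have hpos : 0 < √(S.card : ℝ) := by have := card_pos_of_coe_eq_subgroup hS; positivity
  refine le_of_mul_le_mul_right (?_ : √(S.card : ℝ) * √(S.card : ℝ) ≤ B * √(S.card : ℝ)) hpos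
  rw [Real.mul_self_sqrt (Nat.cast_nonneg _)]
  exact (card_le_opNorm_finsetIndicator hS).trans hB

end Indicator

section RapidDecay

variable [Group G] {ℓ : G → ℝ}

lemma sobolevNorm_le_mul_l2norm (hℓ : ∀ γ, 0 ≤ ℓ γ) {s r : ℝ} (hs : 0 ≤ s) (hr : 0 ≤ r)
    {f : MonoidAlgebra ℂ G} (hf : ∀ γ, f.coeff γ ≠ 0 → ℓ γ ≤ r) :
    sobolevNorm ℓ s f ≤ (1 + r) ^ s * l2norm f := by
  have hsq : ((1 + r) ^ s) ^ 2 = (1 + r) ^ (2 * s) := by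
    rw [← Real.rpow_natCast, ← Real.rpow_mul (by linarith), mul_comm]
    norm_num
  rw [sobolevNorm, l2norm, ← Real.sqrt_sq (by positivity : 0 ≤ (1 + r) ^ s),
    ← Real.sqrt_mul (sq_nonneg _), hsq, Finset.mul_sum]
  refine Real.sqrt_le_sqrt (Finset.sum_le_sum fun γ hγ => ?_)
  rw [mul_comm ((1 + r) ^ (2 * s))]
  gcongr
  · linarith [hℓ γ]
  · exact hf γ (Finsupp.mem_support_iff.mp hγ)

lemma sqrt_ncard_le_eval_of_polynomial_bound {P : Polynomial ℝ}
    (hP : ∀ r : ℝ, 0 ≤ r → ∀ f : MonoidAlgebra ℂ G, (∀ γ : G, 0 ≤ f.coeff γ) →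
      (∀ γ : G, f.coeff γ ≠ 0 → ℓ γ ≤ r) → opNorm f ≤ P.eval r * l2norm f)
    {H : Subgroup G} (hH : (H : Set G).Finite) {R : ℝ} (hR : 0 ≤ R)
    (hball : (H : Set G) ⊆ {γ | ℓ γ ≤ R}) : √((H : Set G).ncard : ℝ) ≤ P.eval R := by
  have hS : (hH.toFinset : Set G) = H := hH.coe_toFinset
  have hsupp (γ : G) (hγ : (finsetIndicator hH.toFinset).coeff γ ≠ 0) : ℓ γ ≤ R := by
    rw [← Finsupp.mem_support_iff, support_finsetIndicator, ← Finset.mem_coe, hS] at hγ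
    exact hball hγ
  rw [Set.ncard_eq_toFinset_card _ hH]
  exact sqrt_card_le_of_opNorm_finsetIndicator_le hS
    (hP R hR _ (coeff_finsetIndicator_nonneg _) hsupp)

lemma PropertyRD.exists_polynomial_bound (hℓ : ∀ γ, 0 ≤ ℓ γ) (hRD : PropertyRD ℓ) :
    ∃ P : Polynomial ℝ, ∀ r : ℝ, 0 ≤ r → ∀ f : MonoidAlgebra ℂ G,
      (∀ γ : G, f.coeff γ ≠ 0 → ℓ γ ≤ r) → opNorm f ≤ P.eval r * l2norm f := by
  obtain ⟨C, s, hC, hs, hbound⟩ := hRD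
  refine ⟨Polynomial.C C * (1 + Polynomial.X) ^ ⌈s⌉₊, fun r hr f hf => ?_⟩
  have hpow : (1 + r) ^ s ≤ (1 + r) ^ ⌈s⌉₊ := by
    rw [← Real.rpow_natCast]
    exact Real.rpow_le_rpow_of_exponent_le (by linarith) (Nat.le_ceil s)
  calc opNorm f ≤ C * sobolevNorm ℓ s f := hbound f
    _ ≤ C * ((1 + r) ^ s * l2norm f) := by
      gcongr
      exact sobolevNorm_le_mul_l2norm hℓ hs.le hr hf
    _ ≤ C * ((1 + r) ^ ⌈s⌉₊ * l2norm f) := by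
      gcongr
      exact l2norm_nonneg f
    _ = _ := by simp [mul_assoc]

end RapidDecay

end GroupAlgebra

lemma Polynomial.not_forall_pow_le_eval_natCast (Q : Polynomial ℝ) {q : ℝ} (hq : 1 < q) :
    ¬ ∀ n : ℕ, q ^ n ≤ Q.eval (n : ℝ) := by
  intro h
  have hQ : (fun n : ℕ => Q.eval (n : ℝ)) =O[Filter.atTop] fun n : ℕ => (n : ℝ) ^ Q.natDegree := by
    have := Polynomial.isBigO_atTop_of_degree_le Q (Polynomial.X ^ Q.natDegree)
      (by simp [Polynomial.degree_le_natDegree])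
    simp only [Polynomial.eval_pow, Polynomial.eval_X] at this
    exact this.comp_tendsto tendsto_natCast_atTop_atTop
  have hexp : (fun n : ℕ => q ^ n) =O[Filter.atTop] fun n : ℕ => Q.eval (n : ℝ) :=
    Asymptotics.IsBigO.of_bound 1 (Filter.Eventually.of_forall fun n => by
      rw [one_mul, Real.norm_of_nonneg (by positivity),
        Real.norm_of_nonneg ((pow_pos (by linarith) n).le.trans (h n))]
      exact h n)
  exact Asymptotics.isLittleO_irrefl
    (Filter.Frequently.of_forall fun n => (pow_pos (by linarith : 0 < q) n).ne')
    (hexp.trans_isLittleO (hQ.trans_isLittleO (isLittleO_pow_const_const_pow_of_one_lt _ hq)))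

/-- If `G` contains finite subgroups `L_n ⊆ B_ℓ(e, Cn)` with
`|L_n| ≥ p^(n+1)` for some `C > 0` and `p > 1`, then `G` does not have property RD with
respect to `ℓ`; equivalently there is no polynomial `P` with `‖f‖_* ≤ P(r)·‖f‖₂` for all
nonnegative `f ∈ ℂG` supported in `B_ℓ(e,r)`. -/
theorem exponentially_large_finite_subgroups_no_rd {G : Type*} [Group G] (ℓ : G → ℝ)
    (hℓ : IsLengthFunction ℓ) (C p : ℝ) (hC : 0 < C) (hp : 1 < p)
    (L : ℕ → Subgroup G) (hfin : ∀ n : ℕ, ((L n : Set G)).Finite)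
    (hball : ∀ n : ℕ, (L n : Set G) ⊆ {γ : G | ℓ γ ≤ C * n})
    (hcard : ∀ n : ℕ, p ^ (n + 1) ≤ ((L n : Set G).ncard : ℝ)) :
    ¬ PropertyRD ℓ ∧
    ¬ ∃ P : Polynomial ℝ, ∀ r : ℝ, 0 ≤ r → ∀ f : MonoidAlgebra ℂ G,
      (∀ γ : G, 0 ≤ f.coeff γ) → (∀ γ : G, f.coeff γ ≠ 0 → ℓ γ ≤ r) →
      opNorm f ≤ P.eval r * l2norm f := by
  obtain ⟨-, hℓ_nonneg, -, -⟩ := hℓ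
  have no_polynomial_bound : ¬ ∃ P : Polynomial ℝ, ∀ r : ℝ, 0 ≤ r → ∀ f : MonoidAlgebra ℂ G,
      (∀ γ : G, 0 ≤ f.coeff γ) → (∀ γ : G, f.coeff γ ≠ 0 → ℓ γ ≤ r) →
      opNorm f ≤ P.eval r * l2norm f := by
    rintro ⟨P, hP⟩
    refine ((P.comp (Polynomial.C C * Polynomial.X)) ^ 2).not_forall_pow_le_eval_natCast hp
      fun n => ?_
    calc p ^ n ≤ p ^ (n + 1) := pow_le_pow_right₀ hp.le n.le_succ
      _ ≤ (L n : Set G).ncard := hcard n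
      _ = √((L n : Set G).ncard : ℝ) ^ 2 := (Real.sq_sqrt (Nat.cast_nonneg _)).symm
      _ ≤ P.eval (C * n) ^ 2 := pow_le_pow_left₀ (Real.sqrt_nonneg _)
        (sqrt_ncard_le_eval_of_polynomial_bound hP (hfin n) (by positivity) (hball n)) 2
      _ = _ := by simp
  refine ⟨fun hRD => no_polynomial_bound ?_, no_polynomial_bound⟩
  obtain ⟨P, hP⟩ := hRD.exists_polynomial_bound hℓ_nonneg
  exact ⟨P, fun r hr f _ hf => hP r hr f hf⟩
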